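/- arXiv:2510.03148 — 6 statements merged into one kernel-verified Lean document; each statement's English description precedes it below -/
import Mathlib

section
/- Every noncrossing partition of {0,1,...,n} (with n ≥ 3) without singleton blocks and with at least 2 blocks contains a block consisting of a set of consecutive nonzero integers {i, i+1, ..., j} with 1 ≤ i ≤ j ≤ n. -/
def IsPartition {n : ℕ} (P : Finset (Finset (Fin (n+1)))) : Prop :=
  (∀ B ∈ P, B.Nonempty) ∧ ∀ x : Fin (n+1), ∃! B, B ∈ P ∧ x ∈ B

def IsNoncrossing {n : ℕ} (P : Finset (Finset (Fin (n+1)))) : Prop :=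
  ∀ a b c d : Fin (n+1), a < b → b < c → c < d →
    ∀ B ∈ P, ∀ B' ∈ P, a ∈ B → c ∈ B → b ∈ B' → d ∈ B' → B = B'

def NoSingletons {n : ℕ} (P : Finset (Finset (Fin (n+1)))) : Prop :=
  ∀ B ∈ P, 2 ≤ B.card

/-- Every noncrossing partition of `{0,1,...,n}` (with `n ≥ 3`) without singleton
blocks and with at least 2 blocks contains a block consisting of a set of
consecutive nonzero integers `{i, i+1, ..., j}` with `1 ≤ i ≤ j ≤ n`. -/
theorem exists_block_of_consecutive_nonzero
    {n : ℕ} (hn : 3 ≤ n) (P : Finset (Finset (Fin (n+1))))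
    (hpart : IsPartition P) (hnc : IsNoncrossing P) (hns : NoSingletons P)
    (hblocks : 2 ≤ P.card) :
    ∃ B ∈ P, ∃ i j : Fin (n+1), 1 ≤ (i : ℕ) ∧ i ≤ j ∧ B = Finset.Icc i j := by
  classical
  obtain ⟨hne, huniq⟩ := hpart
  obtain ⟨B0, ⟨hB0P, hB00⟩, hB0u⟩ := huniq 0
  have hex : ∃ B1 ∈ P, B1 ≠ B0 := by
    by_contra h
    push_neg at h
    have hsub : P ⊆ {B0} := fun B hB => Finset.mem_singleton.mpr (h B hB)
    have := Finset.card_le_card hsub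
    simp at this
    omega
  obtain ⟨B1, hB1P, hB1ne⟩ := hex
  set S : Finset (Finset (Fin (n+1))) := P.filter (fun B => 0 ∉ B) with hSdef
  have hB1S : B1 ∈ S :=
    Finset.mem_filter.mpr ⟨hB1P, fun h0 => hB1ne (hB0u B1 ⟨hB1P, h0⟩)⟩
  obtain ⟨B, hBS, hBmin⟩ := S.exists_min_image
    (fun B => B.sup (fun x : Fin (n+1) => (x : ℕ)) +
      B.sup (fun x : Fin (n+1) => n - (x : ℕ))) ⟨B1, hB1S⟩
  obtain ⟨hBP, h0B⟩ := Finset.mem_filter.mp hBS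
  have hBne : B.Nonempty := hne B hBP
  set i := B.min' hBne with hi
  set j := B.max' hBne with hj
  have hiB : i ∈ B := B.min'_mem hBne
  have hjB : j ∈ B := B.max'_mem hBne
  have hij : i ≤ j := B.min'_le j hjB
  have hi1 : 1 ≤ (i : ℕ) := by
    rcases Nat.eq_zero_or_pos (i : ℕ) with h | h
    · exact absurd (by rwa [show i = 0 from Fin.ext h] at hiB) h0B
    · exact h
  -- sup values for B
  have hsup1 : B.sup (fun x : Fin (n+1) => (x : ℕ)) = (j : ℕ) := by
    apply le_antisymm
    · exact Finset.sup_le fun x hx => Fin.le_iff_val_le_val.mp (B.le_max' x hx)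
    · exact Finset.le_sup hjB
  have hsup2 : B.sup (fun x : Fin (n+1) => n - (x : ℕ)) = n - (i : ℕ) := by
    apply le_antisymm
    · exact Finset.sup_le fun x hx =>
        Nat.sub_le_sub_left (Fin.le_iff_val_le_val.mp (B.min'_le x hx)) n
    · exact Finset.le_sup (f := fun x : Fin (n+1) => n - (x : ℕ)) hiB
  refine ⟨B, hBP, i, j, hi1, hij, ?_⟩
  apply le_antisymm
  · intro x hx
    exact Finset.mem_Icc.mpr ⟨B.min'_le x hx, B.le_max' x hx⟩
  · intro x hx
    by_contra hxB
    obtain ⟨hxi, hxj⟩ := Finset.mem_Icc.mp hx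
    have hxi' : i < x := lt_of_le_of_ne hxi (fun h => hxB (h ▸ hiB))
    have hxj' : x < j := lt_of_le_of_ne hxj (fun h => hxB (h ▸ hjB))
    obtain ⟨B', ⟨hB'P, hxB'⟩, hB'u⟩ := huniq x
    have hBB' : B ≠ B' := fun h => hxB (h ▸ hxB')
    have hdisj : ∀ z : Fin (n+1), z ∈ B → z ∈ B' → B = B' := by
      intro z hzB hzB'
      obtain ⟨C, _, hCu⟩ := huniq z
      rw [hCu B ⟨hBP, hzB⟩, hCu B' ⟨hB'P, hzB'⟩]
    -- every y ∈ B' satisfies i < y < j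
    have hbound : ∀ y ∈ B', i < y ∧ y < j := by
      intro y hyB'
      constructor
      · by_contra hy
        push_neg at hy
        rcases lt_or_eq_of_le hy with hy | hy
        · exact hBB' (hnc y i x j hy hxi' hxj' B' hB'P B hBP hyB' hxB' hiB hjB).symm
        · rw [← hy] at hiB; exact hBB' (hdisj y hiB hyB')
      · by_contra hy
        push_neg at hy
        rcases lt_or_eq_of_le hy with hy | hy
        · exact hBB' (hnc i x j y hxi' hxj' hy B hBP B' hB'P hiB hjB hxB' hyB')
        · rw [hy] at hjB; exact hBB' (hdisj y hjB hyB')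
    have hB'S : B' ∈ S := by
      refine Finset.mem_filter.mpr ⟨hB'P, fun h0 => ?_⟩
      have := (hbound 0 h0).1
      exact absurd this (by simp [Fin.lt_iff_val_lt_val])
    have hij' : (i : ℕ) ≤ (j : ℕ) := hij
    have hkey := hBmin B' hB'S
    rw [hsup1, hsup2] at hkey
    have h1 : B'.sup (fun x : Fin (n+1) => (x : ℕ)) < (j : ℕ) := by
      apply Finset.sup_lt_iff (by simp only [bot_eq_zero]; omega : (⊥ : ℕ) < (j : ℕ)) |>.mpr
      intro y hy
      exact Fin.lt_iff_val_lt_val.mp (hbound y hy).2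
    have h2 : B'.sup (fun x : Fin (n+1) => n - (x : ℕ)) ≤ n - (i : ℕ) :=
      Finset.sup_le fun y hy =>
        Nat.sub_le_sub_left (le_of_lt (Fin.lt_iff_val_lt_val.mp (hbound y hy).1)) n
    have hjle : (j : ℕ) ≤ n := Nat.lt_succ_iff.mp j.isLt
    omega
end

section
/- Let A(t) be the ordinary generating function of the Riordan numbers R(n) (counting noncrossing partitions of {0,...,n-1} without singleton blocks, with R(0)=1, R(1)=0). Then A satisfies the functional equation A(t) = 1/(1+t) + t·A(t)², as an identity of formal power series. -/
/-!
Write `A = ∑ R(n) tⁿ` and `W = 2tA - 1`. The Riordan recurrence is exactly the coefficientwise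
form of the linear differential equation `(1 + t)(1 - 3t) W' = -2W`. It follows that
`P = (1 + t) W² - (1 - 3t)` satisfies `(1 - 3t) P' = -3P`, and since `P(0) = 0`, uniqueness for
linear differential equations in characteristic zero forces `P = 0`. Expanding
`(1 + t)(2tA - 1)² = 1 - 3t` and cancelling `4t` leaves `(1 + t)(tA² - A) + 1 = 0`.
-/

/-- The Riordan numbers: `R(0)=1`, `R(1)=0`, `(n+2)·R(n+1) = n·(2R(n)+3R(n-1))`. -/
def riordan : ℕ → ℚ
  | 0 => 1
  | 1 => 0
  | (n+2) => ((n : ℚ) + 1) * (2 * riordan (n+1) + 3 * riordan n) / ((n : ℚ) + 3)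

open PowerSeries

@[simp]
theorem PowerSeries.coeff_ofNat_mul {R : Type*} [Semiring R] {a n : ℕ} [a.AtLeastTwo]
    {f : R⟦X⟧} : coeff n ((ofNat(a) : R⟦X⟧) * f) = ofNat(a) * coeff n f :=
  coeff_C_mul _ _ _

theorem PowerSeries.eq_zero_of_derivative_eq_mul {R : Type*} [CommRing R] [IsAddTorsionFree R]
    {f g : R⟦X⟧} (h0 : constantCoeff f = 0) (hf : d⁄dX R f = g * f) : f = 0 := by
  suffices ∀ n, ∀ m ≤ n, coeff m f = 0 by ext n; simpa using this n n le_rfl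
  intro n
  induction n with
  | zero => simpa using h0
  | succ n ih =>
    intro m hm
    rcases Nat.of_le_succ hm with hm | rfl
    · exact ih m hm
    have hcoeff : coeff (n + 1) f * (n + 1) = 0 := by
      rw [← coeff_derivative, hf, coeff_mul]
      exact Finset.sum_eq_zero fun p hp ↦ by
        rw [ih p.2 (Finset.HasAntidiagonal.antidiagonal.snd_le hp), mul_zero]
    rw [← Nat.cast_succ, mul_comm, ← nsmul_eq_mul] at hcoeff
    exact (smul_eq_zero.mp hcoeff).resolve_left n.succ_ne_zero

theorem riordan_add_two_mul (n : ℕ) :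
    ((n : ℚ) + 3) * riordan (n + 2) = ((n : ℚ) + 1) * (2 * riordan (n + 1) + 3 * riordan n) := by
  rw [riordan]
  field_simp

noncomputable def riordanW : ℚ⟦X⟧ := 2 * X * mk riordan - 1

theorem constantCoeff_riordanW : constantCoeff riordanW = -1 := by
  simp [riordanW]

theorem coeff_succ_riordanW (n : ℕ) : coeff (n + 1) riordanW = 2 * riordan n := by
  simp [riordanW, mul_assoc, coeff_succ_X_mul]

theorem riordanW_ode : (1 + X) * (1 - 3 * X) * d⁄dX ℚ riordanW = -2 * riordanW := by
  set W' := d⁄dX ℚ riordanW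
  rw [← sub_eq_zero, show (1 + X) * (1 - 3 * X) * W' - -2 * riordanW
    = W' + 2 * riordanW - X * (2 * W' + X * (3 * W')) by ring]
  ext (_ | _ | n) <;> simp only [W', map_sub, map_add, coeff_succ_X_mul, coeff_ofNat_mul,
      coeff_derivative, coeff_zero_eq_constantCoeff_apply, constantCoeff_riordanW,
      coeff_succ_riordanW, map_zero]
  · norm_num [riordan]
  · norm_num [riordan]
  · push_cast
    linear_combination 2 * riordan_add_two_mul n

theorem one_add_X_mul_riordanW_sq : (1 + X) * riordanW ^ 2 = 1 - 3 * X := by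
  set P := (1 + X) * riordanW ^ 2 - (1 - 3 * X)
  have hP0 : constantCoeff P = 0 := by
    simp [P, constantCoeff_riordanW]
  have hode : (1 - 3 * X) * d⁄dX ℚ P = -3 * P := by
    have h3 : d⁄dX ℚ (3 : ℚ⟦X⟧) = 0 := (d⁄dX ℚ).map_natCast 3
    simp only [P, map_sub, map_add, Derivation.leibniz, Derivation.leibniz_pow, derivative_X,
      Derivation.map_one_eq_zero, h3, smul_eq_mul, nsmul_eq_mul]
    linear_combination 2 * riordanW * riordanW_ode
  have hunit : constantCoeff (1 - 3 * X : ℚ⟦X⟧) ≠ 0 := by simp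
  have hP' : d⁄dX ℚ P = ((1 - 3 * X)⁻¹ * -3) * P := by
    rw [mul_assoc, ← hode, ← mul_assoc, PowerSeries.inv_mul_cancel _ hunit, one_mul]
  exact sub_eq_zero.mp (eq_zero_of_derivative_eq_mul hP0 hP')

/-- The generating function `A(t) = ∑ R(n) tⁿ` of the Riordan numbers satisfies
`A = 1/(1+t) + t·A²` in `ℚ[[t]]`. -/
theorem riordan_gf_functional_equation :
    (PowerSeries.mk riordan : PowerSeries ℚ) =
      (1 + PowerSeries.X)⁻¹ + PowerSeries.X * (PowerSeries.mk riordan)^2 := by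
  have hquad : (1 + X) * (X * mk riordan ^ 2 - mk riordan) + 1 = 0 := by
    have hsq := one_add_X_mul_riordanW_sq
    rw [riordanW] at hsq
    have h4X : (4 * X : ℚ⟦X⟧) ≠ 0 := by rw [← map_ofNat C 4]; simp
    refine (mul_eq_zero.mp ?_).resolve_left h4X
    linear_combination hsq
  rw [← sub_eq_iff_eq_add, PowerSeries.eq_inv_iff_mul_eq_one (by simp)]
  linear_combination -hquad
end

section
/- Suppose formal power series f, x, y, z over ℚ with zero constant terms for x, y, z satisfy the system: f = t + x + y, x = (f−z)², y = (f−z)(t+y)t, z = (f−z)(x−z), and f has zero constant term. Then f satisfies t³f² + t²f² + 2t²f + tf + t − f = 0. -/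
/-!
With `g = f − z`, the equations for `z` and `y` say `z(1+g) = g³` and `y(1−gt) = gt²`.
Feeding these into `g = t + g² + y − z` gives `g = t(1+g+g²)`, and `f = g + z` gives
`f(1+g) = g(1+g+g²)`. So `t` and `f` are rational functions of `g`, and substituting them
turns the quadratic into `0` after clearing the unit denominators `1+g` and `1+g+g²`.
-/

open PowerSeries

section System

variable {R : Type*} [CommRing R] {t f g x y z : R}

theorem mul_one_add_eq_pow_three (h2 : x = g ^ 2) (h4 : z = g * (x - z)) :
    z * (1 + g) = g ^ 3 := by
  linear_combination h4 + g * h2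

theorem mul_one_sub_mul_eq (h3 : y = g * (t + y) * t) : y * (1 - g * t) = g * t ^ 2 := by
  linear_combination h3

-- Multiplying `g = t + g² + y − z` by `(1+g)(1−gt)` gives exactly `g = t(1+g+g²)`:
-- no cancellation is needed.
theorem eq_mul_one_add_add_sq (hg : g = f - z) (h1 : f = t + x + y) (h2 : x = g ^ 2)
    (h3 : y = g * (t + y) * t) (h4 : z = g * (x - z)) :
    g = t * (1 + g + g ^ 2) := by
  have hz := mul_one_add_eq_pow_three h2 h4
  have hy := mul_one_sub_mul_eq h3
  linear_combination (1 + g) * (1 - g * t) * (hg + h1 + h2) - (1 - g * t) * hz + (1 + g) * hy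

theorem mul_one_add_eq_mul (hg : g = f - z) (hz : z * (1 + g) = g ^ 3) :
    f * (1 + g) = g * (1 + g + g ^ 2) := by
  linear_combination hz - (1 + g) * hg

theorem quadratic_eq_zero_of_eq_mul (hu : IsUnit (1 + g)) (hs : IsUnit (1 + g + g ^ 2))
    (ht : g = t * (1 + g + g ^ 2)) (hf : f * (1 + g) = g * (1 + g + g ^ 2)) :
    t ^ 3 * f ^ 2 + t ^ 2 * f ^ 2 + 2 * t ^ 2 * f + t * f + t - f = 0 := by
  have htf : t * f * (1 + g) = g ^ 2 := by linear_combination t * hf - g * ht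
  set u := t * f * (1 + g)
  have key : ((1 + g + g ^ 2) * (1 + g) ^ 2) *
      (t ^ 3 * f ^ 2 + t ^ 2 * f ^ 2 + 2 * t ^ 2 * f + t * f + t - f) = 0 := by
    linear_combination -(u + 1 + g) ^ 2 * ht
      + (1 + g) * ((1 + g) * (u + g ^ 2) + 2 * g + (1 + g + g ^ 2)) * htf
      - (1 + g + g ^ 2) * (1 + g) * hf
  exact ((hs.mul (hu.pow 2)).mul_right_eq_zero).mp key

end System

theorem PowerSeries.isUnit_one_add {R : Type*} [CommRing R] {φ : R⟦X⟧}
    (hφ : constantCoeff φ = 0) : IsUnit (1 + φ) := by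
  simp [isUnit_iff_constantCoeff, hφ]

theorem system_implies_quadratic_general (f x y z : PowerSeries ℚ)
    (hf0 : constantCoeff f = 0)
    (hz0 : constantCoeff z = 0)
    (h1 : f = X + x + y)
    (h2 : x = (f - z)^2)
    (h3 : y = (f - z) * (X + y) * X)
    (h4 : z = (f - z) * (x - z)) :
    X^3 * f^2 + X^2 * f^2 + 2 * X^2 * f + X * f + X - f = 0 := by
  set g := f - z with hg
  have hg0 : constantCoeff g = 0 := by simp [hg, hf0, hz0]
  have hs : IsUnit (1 + g + g ^ 2) := by
    rw [add_assoc]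
    exact isUnit_one_add (by simp [hg0])
  exact quadratic_eq_zero_of_eq_mul (isUnit_one_add hg0) hs
    (eq_mul_one_add_add_sq hg h1 h2 h3 h4)
    (mul_one_add_eq_mul hg (mul_one_add_eq_pow_three h2 h4))

/-- If `f, x, y, z ∈ ℚ[[t]]` have zero constant terms and satisfy the system
`f = t + x + y`, `x = (f−z)²`, `y = (f−z)(t+y)t`, `z = (f−z)(x−z)`, then
`t³f² + t²f² + 2t²f + tf + t − f = 0`. -/
theorem system_implies_quadratic (f x y z : PowerSeries ℚ)
    (hf0 : constantCoeff f = 0) (hx0 : constantCoeff x = 0)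
    (hy0 : constantCoeff y = 0) (hz0 : constantCoeff z = 0)
    (h1 : f = X + x + y)
    (h2 : x = (f - z)^2)
    (h3 : y = (f - z) * (X + y) * X)
    (h4 : z = (f - z) * (x - z)) :
    X^3 * f^2 + X^2 * f^2 + 2 * X^2 * f + X * f + X - f = 0 :=
  system_implies_quadratic_general f x y z hf0 hz0 h1 h2 h3 h4
end

section
/- Suppose formal power series f, x, y, z over ℚ satisfy f = t + x + y, x = (f−z)², y = (f−z)(t+y)t, z = (f−z)(x−z), with f, x, y, z having zero constant term. Then y = t²f. -/
/-!
Put `g = f - z`. Eliminating `x` and `y` from the system leaves the quadratic `g = t (1 + g + g²)`,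
which forces `g(0) = 0` in `ℚ[[t]]`, so `1 + g` and `1 - g t` are units. Against the quadratic, the
equations `z (1 + g) = g³` and `y (1 - g t) = g t²` then cancel to `z = f g t` and `y = t² f`.
-/

open PowerSeries

section System

variable {R : Type*} [CommRing R] {t f x y z : R}

theorem sub_eq_mul_quadratic_of_system (h1 : f = t + x + y) (h2 : x = (f - z) ^ 2)
    (h3 : y = (f - z) * (t + y) * t) (h4 : z = (f - z) * (x - z)) :
    f - z = t * (1 + (f - z) + (f - z) ^ 2) := by
  linear_combination ((1 + (f - z)) * (1 - (f - z) * t)) * h1 + (1 - (f - z) * t) * h2 +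
    (1 + (f - z)) * h3 - (1 - (f - z) * t) * h4

theorem z_eq_of_system (h1 : f = t + x + y) (h2 : x = (f - z) ^ 2)
    (h3 : y = (f - z) * (t + y) * t) (h4 : z = (f - z) * (x - z))
    (hunit : IsUnit (1 + (f - z))) :
    z = f * (f - z) * t := by
  have hquad := sub_eq_mul_quadratic_of_system h1 h2 h3 h4
  rw [← hunit.mul_left_inj]
  linear_combination (1 - (f - z) * t) * (h4 + (f - z) * h2) + (f - z) ^ 2 * hquad

theorem y_eq_of_system (h1 : f = t + x + y) (h2 : x = (f - z) ^ 2)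
    (h3 : y = (f - z) * (t + y) * t) (h4 : z = (f - z) * (x - z))
    (hunit : IsUnit (1 + (f - z))) (hunit' : IsUnit (1 - (f - z) * t)) :
    y = t ^ 2 * f := by
  have hz := z_eq_of_system h1 h2 h3 h4 hunit
  rw [← hunit'.mul_left_inj]
  linear_combination h3 - t ^ 2 * hz

end System

theorem system_implies_y_eq_general (f x y z : PowerSeries ℚ)
    (h1 : f = X + x + y)
    (h2 : x = (f - z)^2)
    (h3 : y = (f - z) * (X + y) * X)
    (h4 : z = (f - z) * (x - z)) :
    y = X^2 * f := by
  have hg : constantCoeff (f - z) = 0 := by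
    rw [sub_eq_mul_quadratic_of_system h1 h2 h3 h4, map_mul, constantCoeff_X, zero_mul]
  refine y_eq_of_system h1 h2 h3 h4 ?_ ?_ <;>
    simp [isUnit_iff_constantCoeff, hg]

/-- If `f, x, y, z ∈ ℚ[[t]]` have zero constant terms and satisfy the system
`f = t + x + y`, `x = (f−z)²`, `y = (f−z)(t+y)t`, `z = (f−z)(x−z)`, then
`y = t²·f`. -/
theorem system_implies_y_eq (f x y z : PowerSeries ℚ)
    (hf0 : constantCoeff f = 0) (hx0 : constantCoeff x = 0)
    (hy0 : constantCoeff y = 0) (hz0 : constantCoeff z = 0)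
    (h1 : f = X + x + y)
    (h2 : x = (f - z)^2)
    (h3 : y = (f - z) * (X + y) * X)
    (h4 : z = (f - z) * (x - z)) :
    y = X^2 * f :=
  system_implies_y_eq_general f x y z h1 h2 h3 h4
end

section
/- Suppose formal power series f and z over ℚ (with zero constant terms) satisfy t³f² + t²f² + 2t²f + tf + t − f = 0 and z = (f−z)((f−z)² − z). Then f − z = t·M(t), where M is the Motzkin generating function satisfying M = 1 + tM + t²M². -/
open PowerSeries

/-- Suppose `f, z ∈ ℚ[[t]]` have zero constant terms, `f` satisfies
`t³f² + t²f² + 2t²f + tf + t − f = 0`, and `z = (f−z)((f−z)² − z)`.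
Then `f − z = t·M(t)` where `M` is the Motzkin generating function, i.e. the
unique power series with `M(0)=1` satisfying `M = 1 + tM + t²M²`. -/
theorem f_sub_z_eq_t_mul_motzkin (f z : PowerSeries ℚ)
    (hf0 : constantCoeff f = 0) (hz0 : constantCoeff z = 0)
    (hf : X^3 * f^2 + X^2 * f^2 + 2 * X^2 * f + X * f + X - f = 0)
    (hz : z = (f - z) * ((f - z)^2 - z)) :
    ∀ M : PowerSeries ℚ, constantCoeff M = 1 →
      M = 1 + X * M + X^2 * M^2 → f - z = X * M := by
  intro M hM0 hM
  set P : PowerSeries ℚ := f - z with hP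
  -- the unit cofactor
  have hC0 : constantCoeff
      (X^2*(P^4+P^3+P^2) + X*(P^4+2*P^3+3*P^2+2*P) + (P^3+2*P^2+2*P+1) :
        PowerSeries ℚ) = 1 := by
    simp [hP, map_add, map_mul, map_pow, map_sub, hf0, hz0, constantCoeff_X]
  have hCne : (X^2*(P^4+P^3+P^2) + X*(P^4+2*P^3+3*P^2+2*P) + (P^3+2*P^2+2*P+1) :
      PowerSeries ℚ) ≠ 0 := by
    intro h
    rw [h] at hC0
    simp at hC0
  -- key factorization
  have key : (P - (X + X*P + X*P^2)) *
      (X^2*(P^4+P^3+P^2) + X*(P^4+2*P^3+3*P^2+2*P) + (P^3+2*P^2+2*P+1)) = 0 := by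
    rw [hP]
    linear_combination (-(1+f-z)^2) * hf +
      (-(1 - X - 2*X^2 - z + z*X + 3*z*X^2 + z*X^3 - z^2*X^2 - z^2*X^3
        + z^3*X^2 + z^3*X^3 + f - f*X - 4*f*X^2 - 2*f*X^3 + 3*f*z*X^2
        + 3*f*z*X^3 - 3*f*z^2*X^2 - 3*f*z^2*X^3 - 2*f^2*X^2 - 2*f^2*X^3
        + 3*f^2*z*X^2 + 3*f^2*z*X^3 - f^3*X^2 - f^3*X^3)) * hz
  have hm : P = X + X*P + X*P^2 := by
    have := mul_eq_zero.mp key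
    rcases this with h | h
    · exact sub_eq_zero.mp h
    · exact absurd h hCne
  -- uniqueness
  have hu0 : constantCoeff (1 - X - X*P - X^2*M : PowerSeries ℚ) = 1 := by
    simp [hP, map_sub, map_mul, map_pow, hf0, hz0, constantCoeff_X]
  have hune : (1 - X - X*P - X^2*M : PowerSeries ℚ) ≠ 0 := by
    intro h
    rw [h] at hu0
    simp at hu0
  have key2 : (P - X*M) * (1 - X - X*P - X^2*M) = 0 := by
    linear_combination hm - X * hM
  rcases mul_eq_zero.mp key2 with h | h
  · exact sub_eq_zero.mp h
  · exact absurd h hune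
end

section
/- In any Yamaguti algebra, the binary operation alone satisfies the degree-5 identity: a·(b·((c·d)·e)) + (a·((b·c)·d))·e + ((a·b)·c)·(d·e) = a·((b·(c·d))·e) + (a·b)·(c·(d·e)) + ((a·(b·c))·d)·e. -/
/-- A Yamaguti algebra (Das): a vector space over `k` with a bilinear operation
`mul`, and two trilinear operations `tr1 = {-,-,-}` and `tr2 = ⦃-,-,-⦄`,
satisfying the relations (AY1)–(AY11). -/
structure YamagutiAlgebra (k : Type*) (V : Type*) [Field k] [AddCommGroup V]
    [Module k V] where
  mul : V → V → V
  tr1 : V → V → V → V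
  tr2 : V → V → V → V
  mul_add_left : ∀ a b c, mul (a + b) c = mul a c + mul b c
  mul_add_right : ∀ a b c, mul a (b + c) = mul a b + mul a c
  mul_smul_left : ∀ (r : k) a b, mul (r • a) b = r • mul a b
  mul_smul_right : ∀ (r : k) a b, mul a (r • b) = r • mul a b
  tr1_add₁ : ∀ a a' b c, tr1 (a + a') b c = tr1 a b c + tr1 a' b c
  tr1_add₂ : ∀ a b b' c, tr1 a (b + b') c = tr1 a b c + tr1 a b' c
  tr1_add₃ : ∀ a b c c', tr1 a b (c + c') = tr1 a b c + tr1 a b c'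
  tr1_smul₁ : ∀ (r : k) a b c, tr1 (r • a) b c = r • tr1 a b c
  tr1_smul₂ : ∀ (r : k) a b c, tr1 a (r • b) c = r • tr1 a b c
  tr1_smul₃ : ∀ (r : k) a b c, tr1 a b (r • c) = r • tr1 a b c
  tr2_add₁ : ∀ a a' b c, tr2 (a + a') b c = tr2 a b c + tr2 a' b c
  tr2_add₂ : ∀ a b b' c, tr2 a (b + b') c = tr2 a b c + tr2 a b' c
  tr2_add₃ : ∀ a b c c', tr2 a b (c + c') = tr2 a b c + tr2 a b c'
  tr2_smul₁ : ∀ (r : k) a b c, tr2 (r • a) b c = r • tr2 a b c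
  tr2_smul₂ : ∀ (r : k) a b c, tr2 a (r • b) c = r • tr2 a b c
  tr2_smul₃ : ∀ (r : k) a b c, tr2 a b (r • c) = r • tr2 a b c
  ay1 : ∀ a b c, mul (mul a b) c - mul a (mul b c) + tr1 a b c - tr2 a b c = 0
  ay2 : ∀ a b c d, tr1 (mul a b) c d = tr1 a (mul b c) d
  ay3 : ∀ a b c d, tr1 a b (mul c d) = mul (tr1 a b c) d
  ay4 : ∀ a b c d, tr2 (mul a b) c d = mul a (tr2 b c d)
  ay5 : ∀ a b c d, tr2 a (mul b c) d = tr2 a b (mul c d)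
  ay6 : ∀ a b c d, mul a (tr1 b c d) = mul (tr2 a b c) d
  ay7a : ∀ a b c d e, tr1 (tr1 a b c) d e = tr1 a (tr2 b c d) e
  ay7b : ∀ a b c d e, tr1 a (tr2 b c d) e = tr1 a b (tr1 c d e)
  ay8 : ∀ a b c d e, tr1 a (tr1 b c d) e = tr1 (tr2 a b c) d e
  ay9a : ∀ a b c d e, tr2 (tr2 a b c) d e = tr2 a (tr1 b c d) e
  ay9b : ∀ a b c d e, tr2 a (tr1 b c d) e = tr2 a b (tr2 c d e)
  ay10 : ∀ a b c d e, tr2 a (tr2 b c d) e = tr2 a b (tr1 c d e)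
  ay11 : ∀ a b c d e, tr1 a b (tr2 c d e) = tr2 (tr1 a b c) d e

/-- In any Yamaguti algebra, the binary operation alone satisfies the degree-5 identity
`a(b((cd)e)) + (a((bc)d))e + ((ab)c)(de) = a((b(cd))e) + (ab)(c(de)) + ((a(bc))d)e`. -/
theorem yamaguti_binary_degree5_identity {k V : Type*} [Field k] [AddCommGroup V] [Module k V]
    (Y : YamagutiAlgebra k V) :
    ∀ a b c d e : V,
      Y.mul a (Y.mul b (Y.mul (Y.mul c d) e))
        + Y.mul (Y.mul a (Y.mul (Y.mul b c) d)) e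
        + Y.mul (Y.mul (Y.mul a b) c) (Y.mul d e)
      = Y.mul a (Y.mul (Y.mul b (Y.mul c d)) e)
        + Y.mul (Y.mul a b) (Y.mul c (Y.mul d e))
        + Y.mul (Y.mul (Y.mul a (Y.mul b c)) d) e := by
  intro a b c d e
  -- subtraction lemmas for mul
  have msubr : ∀ x y z : V, Y.mul x (y - z) = Y.mul x y - Y.mul x z := by
    intro x y z
    rw [eq_sub_iff_add_eq, ← Y.mul_add_right, sub_add_cancel]
  have msubl : ∀ x y z : V, Y.mul (x - y) z = Y.mul x z - Y.mul y z := by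
    intro x y z
    rw [eq_sub_iff_add_eq, ← Y.mul_add_left, sub_add_cancel]
  -- associator identity from (AY1)
  have assoc : ∀ x y z : V,
      Y.mul (Y.mul x y) z - Y.mul x (Y.mul y z) = Y.tr2 x y z - Y.tr1 x y z := by
    intro x y z
    have h := Y.ay1 x y z
    rw [← sub_eq_zero, ← h]
    abel
  have assoc' : ∀ x y z : V,
      Y.mul x (Y.mul y z) - Y.mul (Y.mul x y) z = Y.tr1 x y z - Y.tr2 x y z := by
    intro x y z
    rw [← neg_sub, assoc, neg_sub]
  have eq1 : Y.mul a (Y.mul b (Y.mul (Y.mul c d) e))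
        - Y.mul a (Y.mul (Y.mul b (Y.mul c d)) e)
      = Y.mul (Y.tr2 a (Y.mul b c) d) e - Y.tr2 (Y.mul a b) c (Y.mul d e) := by
    rw [← msubr, assoc' b (Y.mul c d) e, msubr, ← Y.ay2 b c d e, Y.ay6,
      Y.ay5 b c d e, ← Y.ay4]
  have eq2 : Y.mul (Y.mul a (Y.mul (Y.mul b c) d)) e
        - Y.mul (Y.mul (Y.mul a (Y.mul b c)) d) e
      = Y.tr1 (Y.mul a b) c (Y.mul d e) - Y.mul (Y.tr2 a (Y.mul b c) d) e := by
    rw [← msubl, assoc' a (Y.mul b c) d, msubl, ← Y.ay3, ← Y.ay2]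
  have eq3 : Y.mul (Y.mul (Y.mul a b) c) (Y.mul d e)
        - Y.mul (Y.mul a b) (Y.mul c (Y.mul d e))
      = Y.tr2 (Y.mul a b) c (Y.mul d e) - Y.tr1 (Y.mul a b) c (Y.mul d e) :=
    assoc (Y.mul a b) c (Y.mul d e)
  rw [← sub_eq_zero]
  have key : (Y.mul a (Y.mul b (Y.mul (Y.mul c d) e))
        - Y.mul a (Y.mul (Y.mul b (Y.mul c d)) e))
      + (Y.mul (Y.mul a (Y.mul (Y.mul b c) d)) e
        - Y.mul (Y.mul (Y.mul a (Y.mul b c)) d) e)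
      + (Y.mul (Y.mul (Y.mul a b) c) (Y.mul d e)
        - Y.mul (Y.mul a b) (Y.mul c (Y.mul d e))) = 0 := by
    rw [eq1, eq2, eq3]
    abel
  rw [← key]
  abel
end
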